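/- For the cuboctahedron graph with one-particle Hamiltonian h = -Δ, the uniform two-particle ensemble density ρ̄ = (1/6)(1,…,1) ∈ ℝ¹² is not the density of any pure ground state: there exist no complex coefficients c₁,c₂,c₃ with |c₁|²+|c₂|²+|c₃|² = 1 such that the state Ψ = φ₀ ∧ (c₁φ₁ + c₂φ₂ + c₃φ₃) has density ρ̄, where φ₀ = (1/√12)(1,…,1), φ₁ = (1/√8)(-1,-1,-1,-1,1,1,1,1,0,0,0,0), φ₂ = (1/4)(1,-1,-1,1,1,-1,-1,1,0,-2,0,2), φ₃ = (1/4)(-1,-1,1,1,-1,-1,1,1,-2,0,2,0). Equivalently, the system |√2 c₁ ± c₂ ± c₃|² = 4/3 (all four sign choices), |c₂|² = |c₃|² = 1/3 has no solution. -/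

import Mathlib

/-!
Vertices 8 and 9 force `|c₂|² = |c₃|² = 1/3`, and vertices 0–3 give `|a ± b ± c|² = 4/3` with
`a = √2 c₁`, `b = c₂`, `c = c₃`. Regard `ℂ` as the Euclidean plane: expanding the four squared
norms, equality of all of them forces `a`, `b`, `c` to be pairwise orthogonal, and then
`|a|² = 4/3 - |b|² - |c|² = 2/3`. Three nonzero pairwise orthogonal vectors cannot live in a plane.
-/

open scoped BigOperators

noncomputable def phi0 : Fin 12 → ℝ := fun _ => 1 / Real.sqrt 12

noncomputable def phi1 : Fin 12 → ℝ :=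
  fun i => (1 / Real.sqrt 8) * ![-1, -1, -1, -1, 1, 1, 1, 1, 0, 0, 0, 0] i

noncomputable def phi2 : Fin 12 → ℝ :=
  fun i => (1 / 4 : ℝ) * ![1, -1, -1, 1, 1, -1, -1, 1, 0, -2, 0, 2] i

noncomputable def phi3 : Fin 12 → ℝ :=
  fun i => (1 / 4 : ℝ) * ![-1, -1, 1, 1, -1, -1, 1, 1, -2, 0, 2, 0] i

open RealInnerProductSpace

section OrthogonalTriples

variable {E : Type*} [NormedAddCommGroup E] [InnerProductSpace ℝ E]

theorem norm_add_add_sq_real (a b c : E) :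
    ‖a + b + c‖ ^ 2 = ‖a‖ ^ 2 + ‖b‖ ^ 2 + ‖c‖ ^ 2 + 2 * (⟪a, b⟫ + ⟪a, c⟫ + ⟪b, c⟫) := by
  rw [norm_add_sq_real, norm_add_sq_real, inner_add_left]
  ring

theorem inner_eq_zero_of_norm_signed_sums_eq {a b c : E} {s : ℝ}
    (h₁ : ‖a + b + c‖ ^ 2 = s) (h₂ : ‖a + b - c‖ ^ 2 = s)
    (h₃ : ‖a - b + c‖ ^ 2 = s) (h₄ : ‖a - b - c‖ ^ 2 = s) :
    ⟪a, b⟫ = 0 ∧ ⟪a, c⟫ = 0 ∧ ⟪b, c⟫ = 0 ∧ ‖a‖ ^ 2 + ‖b‖ ^ 2 + ‖c‖ ^ 2 = s := by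
  simp only [sub_eq_add_neg, norm_add_add_sq_real, norm_neg, inner_neg_left, inner_neg_right,
    neg_neg] at h₂ h₃ h₄
  rw [norm_add_add_sq_real] at h₁
  refine ⟨?_, ?_, ?_, ?_⟩ <;> linarith

theorem not_pairwise_orthogonal_of_finrank_lt [FiniteDimensional ℝ E] {a b c : E}
    (hE : Module.finrank ℝ E < 3) (ha : a ≠ 0) (hb : b ≠ 0) (hc : c ≠ 0)
    (hab : ⟪a, b⟫ = 0) (hac : ⟪a, c⟫ = 0) (hbc : ⟪b, c⟫ = 0) : False := by
  have hindep : LinearIndependent ℝ ![a, b, c] := by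
    apply linearIndependent_of_ne_zero_of_inner_eq_zero
    · intro i; fin_cases i <;> assumption
    · intro i j hij
      fin_cases i <;> fin_cases j <;> simp_all [real_inner_comm]
  have hcard := hindep.fintype_card_le_finrank
  rw [Fintype.card_fin] at hcard
  omega

end OrthogonalTriples

theorem not_exists_signed_sums_system : ¬ ∃ c₁ c₂ c₃ : ℂ,
    Complex.normSq (Real.sqrt 2 * c₁ + c₂ + c₃) = 4 / 3 ∧
    Complex.normSq (Real.sqrt 2 * c₁ + c₂ - c₃) = 4 / 3 ∧
    Complex.normSq (Real.sqrt 2 * c₁ - c₂ + c₃) = 4 / 3 ∧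
    Complex.normSq (Real.sqrt 2 * c₁ - c₂ - c₃) = 4 / 3 ∧
    Complex.normSq c₂ = 1 / 3 ∧ Complex.normSq c₃ = 1 / 3 := by
  rintro ⟨c₁, c₂, c₃, h₁, h₂, h₃, h₄, h₅, h₆⟩
  simp only [Complex.normSq_eq_norm_sq] at *
  obtain ⟨hab, hac, hbc, hsum⟩ := inner_eq_zero_of_norm_signed_sums_eq (E := ℂ) h₁ h₂ h₃ h₄
  have hne {z : ℂ} (h : 0 < ‖z‖ ^ 2) : z ≠ 0 := by rintro rfl; simp at h
  exact not_pairwise_orthogonal_of_finrank_lt (by simp) (hne (by linarith)) (hne (by linarith))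
    (hne (by linarith)) hab hac hbc

noncomputable def chi (c₁ c₂ c₃ : ℂ) (i : Fin 12) : ℂ :=
  c₁ * (phi1 i : ℂ) + c₂ * (phi2 i : ℂ) + c₃ * (phi3 i : ℂ)

theorem phi0_sq (i : Fin 12) : phi0 i ^ 2 = 1 / 12 := by
  simp [phi0]

theorem one_div_sqrt_eight : 1 / Real.sqrt 8 = Real.sqrt 2 / 4 := by
  rw [show (8 : ℝ) = 2 ^ 2 * 2 by norm_num, Real.sqrt_mul (by positivity),
    Real.sqrt_sq (by norm_num)]
  field_simp
  norm_num

theorem normSq_four_mul_chi_of_density {c₁ c₂ c₃ : ℂ} {i : Fin 12}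
    (h : phi0 i ^ 2 + Complex.normSq (chi c₁ c₂ c₃ i) = 1 / 6) :
    Complex.normSq (4 * chi c₁ c₂ c₃ i) = 4 / 3 := by
  rw [phi0_sq] at h
  rw [Complex.normSq_mul, Complex.normSq_ofNat]
  linarith

theorem four_mul_chi_vertices (c₁ c₂ c₃ : ℂ) :
    4 * chi c₁ c₂ c₃ 1 = -(Real.sqrt 2 * c₁ + c₂ + c₃) ∧
    4 * chi c₁ c₂ c₃ 2 = -(Real.sqrt 2 * c₁ + c₂ - c₃) ∧
    4 * chi c₁ c₂ c₃ 0 = -(Real.sqrt 2 * c₁ - c₂ + c₃) ∧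
    4 * chi c₁ c₂ c₃ 3 = -(Real.sqrt 2 * c₁ - c₂ - c₃) ∧
    4 * chi c₁ c₂ c₃ 9 = -2 * c₂ ∧ 4 * chi c₁ c₂ c₃ 8 = -2 * c₃ := by
  simp only [chi, phi1, phi2, phi3, one_div_sqrt_eight]
  refine ⟨?_, ?_, ?_, ?_, ?_, ?_⟩ <;>
    simp only [Matrix.cons_val, Matrix.cons_val_zero, Matrix.cons_val_one, Fin.isValue] <;>
    push_cast <;> ring

/-- For the cuboctahedron graph, the uniform two-particle ensemble density
`ρ̄ = (1/6)(1,…,1)` is not the density of any pure ground state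
`Ψ = φ₀ ∧ (c₁φ₁ + c₂φ₂ + c₃φ₃)` with `|c₁|²+|c₂|²+|c₃|² = 1`: the density of such a state,
`ρ_i = |φ₀ᵢ|² + |c₁φ₁ᵢ + c₂φ₂ᵢ + c₃φ₃ᵢ|²`, can never equal `1/6` at every vertex. -/
theorem cuboctahedron_not_pure_state_v_representable :
    (¬ ∃ c₁ c₂ c₃ : ℂ,
      Complex.normSq c₁ + Complex.normSq c₂ + Complex.normSq c₃ = 1 ∧
      ∀ i : Fin 12,
        (phi0 i) ^ 2 +
          Complex.normSq (c₁ * (phi1 i : ℂ) + c₂ * (phi2 i : ℂ) + c₃ * (phi3 i : ℂ)) =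
        1 / 6) ∧
    ¬ ∃ c₁ c₂ c₃ : ℂ,
      Complex.normSq (Real.sqrt 2 * c₁ + c₂ + c₃) = 4 / 3 ∧
      Complex.normSq (Real.sqrt 2 * c₁ + c₂ - c₃) = 4 / 3 ∧
      Complex.normSq (Real.sqrt 2 * c₁ - c₂ + c₃) = 4 / 3 ∧
      Complex.normSq (Real.sqrt 2 * c₁ - c₂ - c₃) = 4 / 3 ∧
      Complex.normSq c₂ = 1 / 3 ∧ Complex.normSq c₃ = 1 / 3 := by
  refine ⟨?_, not_exists_signed_sums_system⟩
  rintro ⟨c₁, c₂, c₃, -, hρ⟩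
  have h i := normSq_four_mul_chi_of_density (hρ i)
  obtain ⟨e₁, e₂, e₀, e₃, e₉, e₈⟩ := four_mul_chi_vertices c₁ c₂ c₃
  refine not_exists_signed_sums_system ⟨c₁, c₂, c₃, ?_, ?_, ?_, ?_, ?_, ?_⟩
  · rw [← Complex.normSq_neg, ← e₁]
    exact h 1
  · rw [← Complex.normSq_neg, ← e₂]
    exact h 2
  · rw [← Complex.normSq_neg, ← e₀]
    exact h 0
  · rw [← Complex.normSq_neg, ← e₃]
    exact h 3
  · have h₉ := h 9
    rw [e₉, Complex.normSq_mul, Complex.normSq_neg, Complex.normSq_ofNat] at h₉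
    linarith
  · have h₈ := h 8
    rw [e₈, Complex.normSq_mul, Complex.normSq_neg, Complex.normSq_ofNat] at h₈
    linarith
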